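/- arXiv:2602.16185 — 9 statements merged into one kernel-verified Lean document; each statement's English description precedes it below -/
import Mathlib

section
/- Let n ≥ 1 and let p(z) = ∑_{k=0}^{n} a_k z^k be a polynomial with complex coefficients such that there exist real numbers β and α with 0 ≤ α ≤ π/2 and, for every k = 0, 1, …, n with a_k ≠ 0, |arg(a_k · exp(−βi))| ≤ α, and such that |a_n| ≥ |a_{n−1}| ≥ ⋯ ≥ |a_0| and a_n ≠ 0. Then every complex number z with p(z) = 0 satisfies |z| ≤ cos α + sin α + (2 sin α / |a_n|) · ∑_{k=0}^{n−1} |a_k|. -/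
open Finset

/-!
At a root `z` of `p`, multiplying by `z - 1` gives
`a n * z ^ (n + 1) = a 0 + ∑ k < n, (a (k + 1) - a k) * z ^ (k + 1)`, so for `1 ≤ ‖z‖`,
`‖a n‖ * ‖z‖ ≤ ‖a 0‖ + ∑ k < n, ‖a (k + 1) - a k‖`. After rotating by `exp (-β i)` all
coefficients lie in the sector `|arg| ≤ α`, so consecutive ones make an angle at most `2 α ≤ π`,
and the law of cosines gives
`‖a (k + 1) - a k‖ ≤ (‖a (k + 1)‖ - ‖a k‖) cos α + (‖a (k + 1)‖ + ‖a k‖) sin α`;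
summing, the right-hand side telescopes to the claimed bound.
-/

theorem Real.one_le_cos_add_sin {α : ℝ} (hα0 : 0 ≤ α) (hα : α ≤ Real.pi / 2) :
    1 ≤ Real.cos α + Real.sin α := by
  have hcos : 0 ≤ Real.cos α := Real.cos_nonneg_of_mem_Icc ⟨by linarith [Real.pi_pos], hα⟩
  have hsin : 0 ≤ Real.sin α := Real.sin_nonneg_of_nonneg_of_le_pi hα0 (by linarith)
  nlinarith [Real.sin_sq_add_cos_sq α]

theorem Complex.norm_sub_sq_eq (x y : ℂ) :
    ‖x - y‖ ^ 2 = ‖x‖ ^ 2 + ‖y‖ ^ 2 - 2 * ‖x‖ * ‖y‖ * Real.cos (x.arg - y.arg) := by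
  rw [Complex.sq_norm, Complex.normSq_apply, Complex.sub_re, Complex.sub_im, Real.cos_sub,
    ← Complex.norm_mul_cos_arg x, ← Complex.norm_mul_sin_arg x,
    ← Complex.norm_mul_cos_arg y, ← Complex.norm_mul_sin_arg y]
  linear_combination ‖x‖ ^ 2 * Real.sin_sq_add_cos_sq x.arg + ‖y‖ ^ 2 * Real.sin_sq_add_cos_sq y.arg

theorem Complex.norm_sub_le_of_abs_arg_le {x y : ℂ} {α : ℝ} (hα : α ≤ Real.pi / 2)
    (hx : |x.arg| ≤ α) (hy : |y.arg| ≤ α) (hyx : ‖y‖ ≤ ‖x‖) :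
    ‖x - y‖ ≤ (‖x‖ - ‖y‖) * Real.cos α + (‖x‖ + ‖y‖) * Real.sin α := by
  have hα0 : 0 ≤ α := (abs_nonneg _).trans hx
  have hcos : 0 ≤ Real.cos α := Real.cos_nonneg_of_mem_Icc ⟨by linarith [Real.pi_pos], hα⟩
  have hsin : 0 ≤ Real.sin α := Real.sin_nonneg_of_nonneg_of_le_pi hα0 (by linarith)
  have hangle : Real.cos (2 * α) ≤ Real.cos (x.arg - y.arg) := by
    rw [← Real.cos_abs (x.arg - y.arg)]
    refine Real.cos_le_cos_of_nonneg_of_le_pi (abs_nonneg _) (by linarith) ?_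
    linarith [abs_sub x.arg y.arg]
  set r := ‖x‖
  set s := ‖y‖
  have hsq : ‖x - y‖ ^ 2 ≤ ((r - s) * Real.cos α + (r + s) * Real.sin α) ^ 2 :=
    calc ‖x - y‖ ^ 2 = r ^ 2 + s ^ 2 - 2 * r * s * Real.cos (x.arg - y.arg) :=
          Complex.norm_sub_sq_eq x y
      _ ≤ r ^ 2 + s ^ 2 - 2 * r * s * Real.cos (2 * α) := by
          have : 0 ≤ 2 * r * s := by positivity
          nlinarith
      _ = ((r - s) * Real.cos α) ^ 2 + ((r + s) * Real.sin α) ^ 2 := by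
          rw [Real.cos_two_mul]
          linear_combination (-(r + s) ^ 2) * Real.sin_sq_add_cos_sq α
      _ ≤ ((r - s) * Real.cos α + (r + s) * Real.sin α) ^ 2 := by
          have : 0 ≤ (r - s) * Real.cos α * ((r + s) * Real.sin α) := by
            have : 0 ≤ r - s := sub_nonneg.2 hyx
            positivity
          nlinarith
  exact le_of_pow_le_pow_left₀ two_ne_zero (by positivity) hsq

theorem sub_one_mul_sum_range_succ_mul_pow {R : Type*} [CommRing R] (a : ℕ → R) (z : R) (n : ℕ) :
    (z - 1) * ∑ k ∈ range (n + 1), a k * z ^ k =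
      a n * z ^ (n + 1) - a 0 - ∑ k ∈ range n, (a (k + 1) - a k) * z ^ (k + 1) := by
  induction n with
  | zero =>
    simp only [zero_add, range_one, sum_singleton, pow_zero, mul_one, pow_one, range_zero,
      sum_empty, sub_zero]
    ring
  | succ n ih =>
    rw [sum_range_succ, mul_add, ih, sum_range_succ]
    ring

theorem norm_mul_norm_le_of_sum_mul_pow_eq_zero {𝕜 : Type*} [NormedField 𝕜] (a : ℕ → 𝕜)
    (n : ℕ) {z : 𝕜} (hz : ∑ k ∈ range (n + 1), a k * z ^ k = 0) (hz1 : 1 ≤ ‖z‖) :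
    ‖a n‖ * ‖z‖ ≤ ‖a 0‖ + ∑ k ∈ range n, ‖a (k + 1) - a k‖ := by
  have hlead : a n * z ^ (n + 1) = a 0 + ∑ k ∈ range n, (a (k + 1) - a k) * z ^ (k + 1) := by
    linear_combination (sub_one_mul_sum_range_succ_mul_pow a z n).symm + (z - 1) * hz
  have hpow : 0 < ‖z‖ ^ n := pow_pos (by linarith) n
  refine le_of_mul_le_mul_right ?_ hpow
  calc ‖a n‖ * ‖z‖ * ‖z‖ ^ n = ‖a 0 + ∑ k ∈ range n, (a (k + 1) - a k) * z ^ (k + 1)‖ := by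
        rw [← hlead, norm_mul, norm_pow, pow_succ']; ring
    _ ≤ ‖a 0‖ + ∑ k ∈ range n, ‖a (k + 1) - a k‖ * ‖z‖ ^ (k + 1) := by
        refine (norm_add_le _ _).trans ?_
        gcongr
        exact (norm_sum_le _ _).trans_eq (by simp only [norm_mul, norm_pow])
    _ ≤ ‖a 0‖ * ‖z‖ ^ n + ∑ k ∈ range n, ‖a (k + 1) - a k‖ * ‖z‖ ^ n := by
        gcongr with k hk
        · exact le_mul_of_one_le_right (norm_nonneg _) (one_le_pow₀ hz1)
        · exact mem_range.1 hk
    _ = (‖a 0‖ + ∑ k ∈ range n, ‖a (k + 1) - a k‖) * ‖z‖ ^ n := by rw [add_mul, sum_mul]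

theorem norm_add_sum_norm_sub_le_of_abs_arg_mul_le (a : ℕ → ℂ) (n : ℕ) {u : ℂ} (hu : ‖u‖ = 1)
    {α : ℝ} (hα : α ≤ Real.pi / 2) (harg : ∀ k ≤ n, |(a k * u).arg| ≤ α)
    (hmono : ∀ k < n, ‖a k‖ ≤ ‖a (k + 1)‖) :
    ‖a 0‖ + ∑ k ∈ range n, ‖a (k + 1) - a k‖ ≤
      ‖a n‖ * (Real.cos α + Real.sin α) + 2 * Real.sin α * ∑ k ∈ range n, ‖a k‖ := by
  induction n with
  | zero =>
    have hα0 : 0 ≤ α := (abs_nonneg _).trans (harg 0 le_rfl)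
    simpa using le_mul_of_one_le_right (norm_nonneg _) (Real.one_le_cos_add_sin hα0 hα)
  | succ n ih =>
    have hstep := Complex.norm_sub_le_of_abs_arg_le hα (harg (n + 1) le_rfl) (harg n (by omega))
      (by simpa [hu] using hmono n (by omega))
    simp only [← sub_mul, norm_mul, hu, mul_one] at hstep
    have := ih (fun k hk => harg k (by omega)) (fun k hk => hmono k (by omega))
    rw [sum_range_succ, sum_range_succ]
    linarith

theorem govil_rahman_general (n : ℕ) (a : ℕ → ℂ) (β α : ℝ)
    (hα0 : 0 ≤ α) (hα : α ≤ Real.pi / 2)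
    (harg : ∀ k ≤ n, a k ≠ 0 → |(a k * Complex.exp (-(β : ℂ) * Complex.I)).arg| ≤ α)
    (hmono : ∀ k < n, ‖a k‖ ≤ ‖a (k + 1)‖)
    (han : a n ≠ 0)
    (z : ℂ) (hz : ∑ k ∈ Finset.range (n + 1), a k * z ^ k = 0) :
    ‖z‖ ≤ Real.cos α + Real.sin α +
      2 * Real.sin α / ‖a n‖ * ∑ k ∈ Finset.range n, ‖a k‖ := by
  have hA : 0 < ‖a n‖ := norm_pos_iff.2 han
  have hS : 0 ≤ 2 * Real.sin α / ‖a n‖ * ∑ k ∈ range n, ‖a k‖ := by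
    have := Real.sin_nonneg_of_nonneg_of_le_pi hα0 (by linarith [Real.pi_pos])
    positivity
  rcases lt_or_ge ‖z‖ 1 with hz1 | hz1
  · linarith [Real.one_le_cos_add_sin hα0 hα]
  have hu : ‖Complex.exp (-(β : ℂ) * Complex.I)‖ = 1 := by
    simpa using Complex.norm_exp_ofReal_mul_I (-β)
  have harg' : ∀ k ≤ n, |(a k * Complex.exp (-(β : ℂ) * Complex.I)).arg| ≤ α := fun k hk =>
    (eq_or_ne (a k) 0).elim (fun h => by simpa [h] using hα0) (harg k hk)
  refine le_of_mul_le_mul_left ?_ hA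
  calc ‖a n‖ * ‖z‖ ≤ ‖a 0‖ + ∑ k ∈ range n, ‖a (k + 1) - a k‖ :=
        norm_mul_norm_le_of_sum_mul_pow_eq_zero a n hz hz1
    _ ≤ ‖a n‖ * (Real.cos α + Real.sin α) + 2 * Real.sin α * ∑ k ∈ range n, ‖a k‖ :=
        norm_add_sum_norm_sub_le_of_abs_arg_mul_le a n hu hα harg' hmono
    _ = _ := by field_simp

/-- Govil–Rahman theorem: zeros of a complex polynomial whose coefficients have arguments
in a sector of half-angle `α ≤ π/2` around direction `β`, with nonincreasing moduli
(from leading to constant coefficient), lie in the stated disk. -/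
theorem govil_rahman (n : ℕ) (hn : 1 ≤ n) (a : ℕ → ℂ) (β α : ℝ)
    (hα0 : 0 ≤ α) (hα : α ≤ Real.pi / 2)
    (harg : ∀ k ≤ n, a k ≠ 0 → |(a k * Complex.exp (-(β : ℂ) * Complex.I)).arg| ≤ α)
    (hmono : ∀ k < n, ‖a k‖ ≤ ‖a (k + 1)‖)
    (han : a n ≠ 0)
    (z : ℂ) (hz : ∑ k ∈ Finset.range (n + 1), a k * z ^ k = 0) :
    ‖z‖ ≤ Real.cos α + Real.sin α +
      2 * Real.sin α / ‖a n‖ * ∑ k ∈ Finset.range n, ‖a k‖ :=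
  govil_rahman_general n a β α hα0 hα harg hmono han z hz
end

section
/- Let E be a real inner product space, let a, b ∈ E, and let α be a real number with 0 ≤ α ≤ π/2. If ⟪a, b⟫ ≥ ‖a‖·‖b‖·cos(2α) and ‖b‖ ≤ ‖a‖, then ‖a − b‖ ≤ (‖a‖ − ‖b‖)·cos α + (‖a‖ + ‖b‖)·sin α. -/
open RealInnerProductSpace

/-- Inequality (3.4) of the paper: if the angle between `a` and `b` is at most `2α`
(expressed via the inner product) and `‖b‖ ≤ ‖a‖`, then
`‖a − b‖ ≤ (‖a‖ − ‖b‖) cos α + (‖a‖ + ‖b‖) sin α`. -/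
theorem norm_sub_le_of_inner_ge {E : Type*} [NormedAddCommGroup E] [InnerProductSpace ℝ E]
    (a b : E) (α : ℝ) (hα0 : 0 ≤ α) (hα : α ≤ Real.pi / 2)
    (hinner : ‖a‖ * ‖b‖ * Real.cos (2 * α) ≤ ⟪a, b⟫)
    (hnorm : ‖b‖ ≤ ‖a‖) :
    ‖a - b‖ ≤ (‖a‖ - ‖b‖) * Real.cos α + (‖a‖ + ‖b‖) * Real.sin α := by
  have hc : 0 ≤ Real.cos α := Real.cos_nonneg_of_mem_Icc ⟨by linarith [Real.pi_pos], hα⟩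
  have hs : 0 ≤ Real.sin α := Real.sin_nonneg_of_nonneg_of_le_pi hα0 (by linarith [Real.pi_pos])
  have hR : 0 ≤ (‖a‖ - ‖b‖) * Real.cos α + (‖a‖ + ‖b‖) * Real.sin α := by
    have h1 : 0 ≤ (‖a‖ - ‖b‖) * Real.cos α := mul_nonneg (by linarith) hc
    have h2 : 0 ≤ (‖a‖ + ‖b‖) * Real.sin α :=
      mul_nonneg (by positivity) hs
    linarith
  have hsq : ‖a - b‖ ^ 2 ≤ ((‖a‖ - ‖b‖) * Real.cos α + (‖a‖ + ‖b‖) * Real.sin α) ^ 2 := by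
    have hexp : ‖a - b‖ ^ 2 = ‖a‖ ^ 2 - 2 * ⟪a, b⟫ + ‖b‖ ^ 2 := by
      rw [@norm_sub_sq_real]
    have hcos2 : Real.cos (2 * α) = Real.cos α ^ 2 - Real.sin α ^ 2 := by
      rw [Real.cos_two_mul']
    have hpyth : Real.sin α ^ 2 + Real.cos α ^ 2 = 1 := Real.sin_sq_add_cos_sq α
    have hsin2 : 0 ≤ (‖a‖ ^ 2 - ‖b‖ ^ 2) * (Real.sin α * Real.cos α) := by
      have : ‖b‖ ^ 2 ≤ ‖a‖ ^ 2 := by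
        have := norm_nonneg b; nlinarith
      exact mul_nonneg (by linarith) (mul_nonneg hs hc)
    have key : ((‖a‖ - ‖b‖) * Real.cos α + (‖a‖ + ‖b‖) * Real.sin α) ^ 2
        = ‖a‖ ^ 2 + ‖b‖ ^ 2 - 2 * (‖a‖ * ‖b‖) * (Real.cos α ^ 2 - Real.sin α ^ 2)
          + 2 * ((‖a‖ ^ 2 - ‖b‖ ^ 2) * (Real.sin α * Real.cos α)) := by
      linear_combination (‖a‖ ^ 2 + ‖b‖ ^ 2) * hpyth
    rw [hexp, key, ← hcos2]
    nlinarith [hinner, hsin2]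
  calc ‖a - b‖ = Real.sqrt (‖a - b‖ ^ 2) := by
        rw [Real.sqrt_sq (norm_nonneg _)]
    _ ≤ Real.sqrt (((‖a‖ - ‖b‖) * Real.cos α + (‖a‖ + ‖b‖) * Real.sin α) ^ 2) :=
        Real.sqrt_le_sqrt hsq
    _ = _ := Real.sqrt_sq hR
end

section
/- Let n ≥ 1 and let a_0, …, a_n be real numbers with 0 < a_0 ≤ a_1 ≤ ⋯ ≤ a_n. Define p(q) = ∑_{k=0}^{n} q^k · a_k for q ∈ ℍ. Then every quaternion q with p(q) = 0 satisfies ‖q‖ ≤ 1. -/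
open Finset

/-- Eneström–Kakeya Theorem for quaternionic polynomials with positive nondecreasing
real coefficients: all zeros lie in the closed unit ball. -/
theorem enestrom_kakeya_quaternion (n : ℕ) (hn : 1 ≤ n) (a : ℕ → ℝ)
    (ha0 : 0 < a 0) (hmono : ∀ k < n, a k ≤ a (k + 1))
    (q : Quaternion ℝ)
    (hq : ∑ k ∈ Finset.range (n + 1), q ^ k * (a k : Quaternion ℝ) = 0) :
    ‖q‖ ≤ 1 := by
  by_contra h
  push_neg at h
  have hq0 : (0:ℝ) < ‖q‖ := lt_trans one_pos h
  -- monotonicity up to n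
  have hmono' : ∀ m ≤ n, a 0 ≤ a m := by
    intro m hm
    induction m with
    | zero => exact le_refl _
    | succ k ih =>
      exact le_trans (ih (le_trans (Nat.le_succ k) hm))
        (hmono k (Nat.lt_of_succ_le hm))
  have han : 0 < a n := lt_of_lt_of_le ha0 (hmono' n le_rfl)
  -- shifted sum is zero
  have hA : ∑ k ∈ Finset.range (n + 1), q ^ (k + 1) * (a k : Quaternion ℝ) = 0 := by
    have := congrArg (fun x => q * x) hq
    simpa [Finset.mul_sum, ← mul_assoc, pow_succ'] using this
  have e1 : ∑ k ∈ Finset.range n, q ^ (k + 1) * (a (k + 1) : Quaternion ℝ)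
      = - (a 0 : Quaternion ℝ) := by
    have h2 := Finset.sum_range_succ' (fun k => q ^ k * (a k : Quaternion ℝ)) n
    rw [hq] at h2
    simp only [pow_zero, one_mul] at h2
    exact eq_neg_of_add_eq_zero_left h2.symm
  have e2 : ∑ k ∈ Finset.range n, q ^ (k + 1) * (a k : Quaternion ℝ)
      = - (q ^ (n + 1) * (a n : Quaternion ℝ)) := by
    have h1 := Finset.sum_range_succ (fun k => q ^ (k + 1) * (a k : Quaternion ℝ)) n
    rw [hA] at h1
    exact eq_neg_of_add_eq_zero_left h1.symm
  have key : q ^ (n + 1) * (a n : Quaternion ℝ)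
      = (a 0 : Quaternion ℝ)
        + ∑ k ∈ Finset.range n, q ^ (k + 1) * ((a (k + 1) - a k : ℝ) : Quaternion ℝ) := by
    have : ∑ k ∈ Finset.range n, q ^ (k + 1) * ((a (k + 1) - a k : ℝ) : Quaternion ℝ)
        = (∑ k ∈ Finset.range n, q ^ (k + 1) * (a (k + 1) : Quaternion ℝ))
          - ∑ k ∈ Finset.range n, q ^ (k + 1) * (a k : Quaternion ℝ) := by
      rw [← Finset.sum_sub_distrib]
      refine Finset.sum_congr rfl fun k _ => ?_
      push_cast
      rw [mul_sub]
    rw [this, e1, e2]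
    abel
  -- norms
  have hnorm : ‖q‖ ^ (n + 1) * a n
      ≤ a 0 + ∑ k ∈ Finset.range n, ‖q‖ ^ (k + 1) * (a (k + 1) - a k) := by
    have hl : ‖q ^ (n + 1) * (a n : Quaternion ℝ)‖ = ‖q‖ ^ (n + 1) * a n := by
      rw [norm_mul, norm_pow, Quaternion.norm_coe, Real.norm_eq_abs,
        abs_of_pos han]
    calc ‖q‖ ^ (n + 1) * a n = ‖q ^ (n + 1) * (a n : Quaternion ℝ)‖ := hl.symm
      _ ≤ ‖(a 0 : Quaternion ℝ)‖
          + ‖∑ k ∈ Finset.range n, q ^ (k + 1) * ((a (k + 1) - a k : ℝ) : Quaternion ℝ)‖ := by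
          rw [key]; exact norm_add_le _ _
      _ ≤ a 0 + ∑ k ∈ Finset.range n, ‖q‖ ^ (k + 1) * (a (k + 1) - a k) := by
          gcongr
          · rw [Quaternion.norm_coe, Real.norm_eq_abs, abs_of_pos ha0]
          · refine le_trans (norm_sum_le _ _) ?_
            apply Finset.sum_le_sum
            intro k hk
            rw [norm_mul, norm_pow, Quaternion.norm_coe, Real.norm_eq_abs,
              abs_of_nonneg (sub_nonneg.2 (hmono k (Finset.mem_range.1 hk)))]
  have hbound : a 0 + ∑ k ∈ Finset.range n, ‖q‖ ^ (k + 1) * (a (k + 1) - a k)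
      ≤ ‖q‖ ^ n * a n := by
    have h1 : (1:ℝ) ≤ ‖q‖ := le_of_lt h
    have step : ∑ k ∈ Finset.range n, ‖q‖ ^ (k + 1) * (a (k + 1) - a k)
        ≤ ∑ k ∈ Finset.range n, ‖q‖ ^ n * (a (k + 1) - a k) := by
      apply Finset.sum_le_sum
      intro k hk
      have : ‖q‖ ^ (k + 1) ≤ ‖q‖ ^ n :=
        pow_le_pow_right₀ h1 (Nat.succ_le_of_lt (Finset.mem_range.1 hk))
      exact mul_le_mul_of_nonneg_right this
        (sub_nonneg.2 (hmono k (Finset.mem_range.1 hk)))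
    have tel : ∑ k ∈ Finset.range n, ‖q‖ ^ n * (a (k + 1) - a k)
        = ‖q‖ ^ n * (a n - a 0) := by
      rw [← Finset.mul_sum, Finset.sum_range_sub]
    have ha0' : a 0 ≤ ‖q‖ ^ n * a 0 := by
      nlinarith [one_le_pow₀ h1 (n := n), ha0]
    nlinarith [step, tel, ha0']
  have hp : ‖q‖ ^ n < ‖q‖ ^ (n + 1) := pow_lt_pow_right₀ h (Nat.lt_succ_self n)
  nlinarith [hnorm, hbound, hp, han]
end

section
/- Let n ≥ 1, let a > 0 be a real number, and let a_0, …, a_n be real numbers with 0 < a_0·a^n ≤ a_1·a^{n−1} ≤ ⋯ ≤ a_{n−1}·a ≤ a_n. Define p(q) = ∑_{k=0}^{n} q^k · a_k for q ∈ ℍ. Then every quaternion q with p(q) = 0 satisfies ‖q‖ ≤ 1/a. -/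
/-!
Rescaling `q ↦ r • q` turns the coefficients into `bₖ = aₖ rⁿ⁻ᵏ`, which are positive and
nondecreasing, so it suffices to treat `r = 1`. There, if `p(w) = 0` then
`0 = w p(w) - p(w) = bₙ wⁿ⁺¹ - b₀ - ∑ (bₖ₊₁ - bₖ) wᵏ⁺¹`, and if `‖w‖ > 1` the triangle inequality gives
`bₙ ‖w‖ⁿ⁺¹ ≤ b₀ + ∑ (bₖ₊₁ - bₖ) ‖w‖ᵏ⁺¹ ≤ bₙ ‖w‖ⁿ`, a contradiction.
-/

open Finset

theorem mul_sum_smul_pow_sub_sum_smul_pow {R A : Type*} [CommRing R] [Ring A] [Algebra R A]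
    (b : ℕ → R) (w : A) (n : ℕ) :
    w * ∑ k ∈ range (n + 1), b k • w ^ k - ∑ k ∈ range (n + 1), b k • w ^ k =
      b n • w ^ (n + 1) - b 0 • 1 - ∑ k ∈ range n, (b (k + 1) - b k) • w ^ (k + 1) := by
  induction n with
  | zero => simp
  | succ n ih =>
    rw [sum_range_succ _ (n + 1), mul_add, add_sub_add_comm, ih, sum_range_succ, mul_smul_comm,
      ← pow_succ', sub_smul]
    abel

theorem sum_mul_pow_sub_smul_smul_pow {R A : Type*} [CommSemiring R] [Semiring A] [Algebra R A]
    (a : ℕ → R) (r : R) (q : A) (n : ℕ) :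
    ∑ k ∈ range (n + 1), (a k * r ^ (n - k)) • (r • q) ^ k =
      r ^ n • ∑ k ∈ range (n + 1), a k • q ^ k := by
  rw [smul_sum]
  refine sum_congr rfl fun k hk => ?_
  rw [smul_pow, smul_smul, smul_smul, mul_assoc, pow_sub_mul_pow r (mem_range_succ_iff.mp hk),
    mul_comm]

theorem add_sum_sub_mul_pow_le {b : ℕ → ℝ} {n : ℕ} (hb0 : 0 ≤ b 0)
    (hb : ∀ k < n, b k ≤ b (k + 1)) {t : ℝ} (ht : 1 ≤ t) :
    b 0 + ∑ k ∈ range n, (b (k + 1) - b k) * t ^ (k + 1) ≤ b n * t ^ n := by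
  calc b 0 + ∑ k ∈ range n, (b (k + 1) - b k) * t ^ (k + 1)
      ≤ b 0 * t ^ n + ∑ k ∈ range n, (b (k + 1) - b k) * t ^ n := by
        gcongr with k hk
        · exact le_mul_of_one_le_right hb0 (one_le_pow₀ ht)
        · exact sub_nonneg.mpr (hb k (mem_range.mp hk))
        · exact mem_range.mp hk
    _ = b n * t ^ n := by rw [← sum_mul, ← add_mul, sum_range_sub, add_sub_cancel]

theorem norm_le_one_of_sum_smul_pow_eq_zero {A : Type*} [NormedRing A] [NormMulClass A]
    [NormOneClass A] [NormedAlgebra ℝ A] {b : ℕ → ℝ} {n : ℕ} (hb0 : 0 < b 0)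
    (hb : ∀ k < n, b k ≤ b (k + 1)) {w : A} (hw : ∑ k ∈ range (n + 1), b k • w ^ k = 0) :
    ‖w‖ ≤ 1 := by
  by_contra! hw1
  have hbn : 0 < b n := by
    have hsum := sum_nonneg fun k hk => sub_nonneg.mpr (hb k (mem_range.mp hk))
    rw [sum_range_sub] at hsum
    linarith
  have key : b n • w ^ (n + 1) = b 0 • 1 + ∑ k ∈ range n, (b (k + 1) - b k) • w ^ (k + 1) := by
    have := mul_sum_smul_pow_sub_sum_smul_pow b w n
    rwa [hw, mul_zero, sub_zero, sub_sub, eq_comm, sub_eq_zero] at this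
  have hle : b n * ‖w‖ ^ (n + 1) ≤ b n * ‖w‖ ^ n :=
    calc b n * ‖w‖ ^ (n + 1) = ‖b n • w ^ (n + 1)‖ := by
          rw [norm_smul, norm_pow, Real.norm_of_nonneg hbn.le]
      _ ≤ b 0 + ∑ k ∈ range n, (b (k + 1) - b k) * ‖w‖ ^ (k + 1) := by
          rw [key]
          refine (norm_add_le _ _).trans (add_le_add ?_ ((norm_sum_le _ _).trans ?_))
          · simp [abs_of_pos hb0]
          · refine sum_le_sum fun k hk => ?_
            rw [norm_smul, norm_pow, Real.norm_of_nonneg (sub_nonneg.mpr (hb k (mem_range.mp hk)))]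
      _ ≤ b n * ‖w‖ ^ n := add_sum_sub_mul_pow_le hb0.le hb hw1.le
  rw [pow_succ, mul_le_mul_iff_of_pos_left hbn, mul_le_iff_le_one_right (by positivity)] at hle
  exact hle.not_gt hw1

theorem enestrom_kakeya_quaternion_scaled_general (n : ℕ)
    (r : ℝ) (hr : 0 < r) (a : ℕ → ℝ)
    (ha0 : 0 < a 0 * r ^ n)
    (hmono : ∀ k < n, a k * r ^ (n - k) ≤ a (k + 1) * r ^ (n - (k + 1)))
    (q : Quaternion ℝ)
    (hq : ∑ k ∈ Finset.range (n + 1), q ^ k * (a k : Quaternion ℝ) = 0) :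
    ‖q‖ ≤ 1 / r := by
  have hrq : ∑ k ∈ range (n + 1), (a k * r ^ (n - k)) • (r • q) ^ k = 0 := by
    simp_rw [sum_mul_pow_sub_smul_smul_pow, ← Quaternion.mul_coe_eq_smul, hq, zero_mul]
  have hnorm := norm_le_one_of_sum_smul_pow_eq_zero (b := fun k => a k * r ^ (n - k))
    (by simpa using ha0) hmono hrq
  rw [norm_smul, Real.norm_of_nonneg hr.le] at hnorm
  rw [le_div_iff₀ hr]
  linarith

/-- Rescaled Eneström–Kakeya Theorem for quaternionic polynomials: if
`0 < a₀·r^n ≤ a₁·r^(n−1) ≤ ⋯ ≤ a_{n−1}·r ≤ a_n` for some `r > 0`, then all zeros of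
`p(q) = ∑ q^k a_k` lie in `‖q‖ ≤ 1/r`. -/
theorem enestrom_kakeya_quaternion_scaled (n : ℕ) (hn : 1 ≤ n)
    (r : ℝ) (hr : 0 < r) (a : ℕ → ℝ)
    (ha0 : 0 < a 0 * r ^ n)
    (hmono : ∀ k < n, a k * r ^ (n - k) ≤ a (k + 1) * r ^ (n - (k + 1)))
    (q : Quaternion ℝ)
    (hq : ∑ k ∈ Finset.range (n + 1), q ^ k * (a k : Quaternion ℝ) = 0) :
    ‖q‖ ≤ 1 / r :=
  enestrom_kakeya_quaternion_scaled_general n r hr a ha0 hmono q hq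
end

section
/- Let n ≥ 1, let a > 0 be a real number, and let a_0, …, a_n ∈ ℍ with a_n ≠ 0 satisfy ‖a_0‖·a^n ≤ ‖a_1‖·a^{n−1} ≤ ⋯ ≤ ‖a_{n−1}‖·a ≤ ‖a_n‖. Define p(q) = ∑_{k=0}^{n} q^k · a_k for q ∈ ℍ. Let K₁ > 0 be a real number such that K₁^{n+1} − 2·K₁^n + 1 = 0 and every real K > 0 with K^{n+1} − 2·K^n + 1 = 0 satisfies K ≤ K₁. Then every quaternion q with p(q) = 0 satisfies ‖q‖ ≤ K₁/a. -/
open Finset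

private lemma ek_chain (f : ℕ → ℝ) :
    ∀ n, (∀ k < n, f k ≤ f (k + 1)) → ∀ k ≤ n, f k ≤ f n := by
  intro n
  induction n with
  | zero => intro _ k hk; interval_cases k; exact le_refl _
  | succ m ih =>
    intro h k hk
    rcases eq_or_lt_of_le hk with rfl | hk'
    · exact le_refl _
    · have hk2 : k ≤ m := Nat.lt_succ_iff.mp hk'
      exact (ih (fun j hj => h j (hj.trans (Nat.lt_succ_self m))) k hk2).trans
        (h m (Nat.lt_succ_self m))

/-- Theorem 3.5 (quaternionic instance): if the moduli of the coefficients satisfy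
`‖a₀‖·r^n ≤ ‖a₁‖·r^(n−1) ≤ ⋯ ≤ ‖a_n‖` for some `r > 0`, then all zeros of
`p(q) = ∑ q^k a_k` lie in `‖q‖ ≤ K₁/r`, where `K₁` is the greatest positive root of
`K^(n+1) − 2K^n + 1 = 0`. -/
theorem enestrom_kakeya_quaternion_moduli (n : ℕ) (hn : 1 ≤ n)
    (r : ℝ) (hr : 0 < r) (a : ℕ → Quaternion ℝ) (han : a n ≠ 0)
    (hmono : ∀ k < n, ‖a k‖ * r ^ (n - k) ≤ ‖a (k + 1)‖ * r ^ (n - (k + 1)))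
    (K₁ : ℝ) (hK₁ : 0 < K₁)
    (hroot : K₁ ^ (n + 1) - 2 * K₁ ^ n + 1 = 0)
    (hmax : ∀ K : ℝ, 0 < K → K ^ (n + 1) - 2 * K ^ n + 1 = 0 → K ≤ K₁)
    (q : Quaternion ℝ)
    (hq : ∑ k ∈ Finset.range (n + 1), q ^ k * a k = 0) :
    ‖q‖ ≤ K₁ / r := by
  have hK₁1 : (1 : ℝ) ≤ K₁ := hmax 1 one_pos (by ring)
  set t : ℝ := r * ‖q‖ with ht
  -- it suffices to show t ≤ K₁
  rw [le_div_iff₀ hr]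
  suffices hT : t ≤ K₁ by linarith [mul_comm r ‖q‖]
  have han' : (0 : ℝ) < ‖a n‖ := norm_pos_iff.mpr han
  have ht0 : 0 ≤ t := mul_nonneg hr.le (norm_nonneg q)
  -- chain the monotonicity
  have hchain : ∀ k ≤ n, ‖a k‖ * r ^ (n - k) ≤ ‖a n‖ := by
    intro k hk
    have := ek_chain (fun k => ‖a k‖ * r ^ (n - k)) n hmono k hk
    simpa using this
  -- isolate the leading term
  have hiso : q ^ n * a n = -∑ k ∈ Finset.range n, q ^ k * a k := by
    rw [Finset.sum_range_succ] at hq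
    linear_combination (norm := module) hq
  -- key norm inequality
  have hkey : ‖q‖ ^ n * ‖a n‖ ≤ ∑ k ∈ Finset.range n, ‖q‖ ^ k * ‖a k‖ := by
    calc ‖q‖ ^ n * ‖a n‖ = ‖q ^ n * a n‖ := by rw [norm_mul, norm_pow]
      _ = ‖∑ k ∈ Finset.range n, q ^ k * a k‖ := by rw [hiso, norm_neg]
      _ ≤ ∑ k ∈ Finset.range n, ‖q ^ k * a k‖ := norm_sum_le _ _
      _ = ∑ k ∈ Finset.range n, ‖q‖ ^ k * ‖a k‖ := by
          simp [norm_mul, norm_pow]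
  -- scale by r^n : t^n ≤ ∑ t^k
  have hscaled : t ^ n * ‖a n‖ ≤ ∑ k ∈ Finset.range n, t ^ k * ‖a n‖ := by
    have h1 : t ^ n * ‖a n‖ = (‖q‖ ^ n * ‖a n‖) * r ^ n := by
      rw [ht, mul_pow]; ring
    rw [h1]
    calc (‖q‖ ^ n * ‖a n‖) * r ^ n
        ≤ (∑ k ∈ Finset.range n, ‖q‖ ^ k * ‖a k‖) * r ^ n := by
          exact mul_le_mul_of_nonneg_right hkey (by positivity)
      _ = ∑ k ∈ Finset.range n, t ^ k * (‖a k‖ * r ^ (n - k)) := by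
          rw [Finset.sum_mul]
          refine Finset.sum_congr rfl fun k hk => ?_
          have hk' : k ≤ n := (Finset.mem_range.mp hk).le
          have : r ^ n = r ^ k * r ^ (n - k) := by
            rw [← pow_add]; congr 1; omega
          rw [this, ht, mul_pow]; ring
      _ ≤ ∑ k ∈ Finset.range n, t ^ k * ‖a n‖ := by
          refine Finset.sum_le_sum fun k hk => ?_
          exact mul_le_mul_of_nonneg_left (hchain k (Finset.mem_range.mp hk).le)
            (by positivity)
  have hgeo : t ^ n ≤ ∑ k ∈ Finset.range n, t ^ k := by
    rw [← Finset.sum_mul] at hscaled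
    exact le_of_mul_le_mul_right hscaled han'
  -- case split on t ≤ 1
  rcases le_or_gt t 1 with h1 | h1
  · exact h1.trans hK₁1
  -- t > 1 : get the trinomial inequality
  have htri : t ^ (n + 1) - 2 * t ^ n + 1 ≤ 0 := by
    have h2 : t ^ n * (t - 1) ≤ (∑ k ∈ Finset.range n, t ^ k) * (t - 1) :=
      mul_le_mul_of_nonneg_right hgeo (by linarith)
    rw [geom_sum_mul] at h2
    have h3 : t ^ (n + 1) = t ^ n * t := pow_succ t n
    nlinarith [h2, h3]
  -- IVT to find a root ≥ t
  have hcont : ContinuousOn (fun x : ℝ => x ^ (n + 1) - 2 * x ^ n + 1)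
      (Set.Icc t (t + 1)) := by fun_prop
  have hfb : (0 : ℝ) ≤ (t + 1) ^ (n + 1) - 2 * (t + 1) ^ n + 1 := by
    have hp : (1 : ℝ) ≤ (t + 1) ^ n := one_le_pow₀ (by linarith)
    have : (t + 1) ^ (n + 1) = (t + 1) ^ n * (t + 1) := by ring
    nlinarith
  have hmem : (0 : ℝ) ∈ Set.Icc (t ^ (n + 1) - 2 * t ^ n + 1)
      ((t + 1) ^ (n + 1) - 2 * (t + 1) ^ n + 1) := ⟨htri, hfb⟩
  obtain ⟨s, hs, hfs⟩ := intermediate_value_Icc (by linarith : t ≤ t + 1) hcont hmem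
  have hs0 : 0 < s := lt_of_lt_of_le (by linarith : (0:ℝ) < t) hs.1
  exact hs.1.trans (hmax s hs0 hfs)
end

section
/- Let n ≥ 1, let a > 0 be a real number, and let a_0, …, a_{n−1} ∈ ℍ satisfy ‖a_0‖·a^{n−1} ≤ ‖a_1‖·a^{n−2} ≤ ⋯ ≤ ‖a_{n−2}‖·a ≤ ‖a_{n−1}‖. Then for every real R > 1/a and every quaternion q with ‖q‖ = R, one has ‖∑_{k=0}^{n−1} q^k · a_k‖ ≤ ‖a_{n−1}‖ · ((aR)^n − 1) / (a^{n−1}·(aR − 1)). -/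
open Finset

/-- Geometric-series estimate from the proof of Theorem 3.5 (quaternionic instance):
if `‖a₀‖·r^(n−1) ≤ ‖a₁‖·r^(n−2) ≤ ⋯ ≤ ‖a_{n−1}‖` and `‖q‖ = R > 1/r`, then
`‖∑_{k<n} q^k a_k‖ ≤ ‖a_{n−1}‖ ((rR)^n − 1)/(r^(n−1)(rR − 1))`. -/
theorem lower_part_geometric_bound (n : ℕ) (hn : 1 ≤ n)
    (r : ℝ) (hr : 0 < r) (a : ℕ → Quaternion ℝ)
    (hmono : ∀ k < n - 1, ‖a k‖ * r ^ (n - 1 - k) ≤ ‖a (k + 1)‖ * r ^ (n - 1 - (k + 1)))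
    (R : ℝ) (hR : 1 / r < R)
    (q : Quaternion ℝ) (hq : ‖q‖ = R) :
    ‖∑ k ∈ Finset.range n, q ^ k * a k‖ ≤
      ‖a (n - 1)‖ * ((r * R) ^ n - 1) / (r ^ (n - 1) * (r * R - 1)) := by
  have hrR : 1 < r * R := by
    have := (div_lt_iff₀ hr).mp hR
    linarith [this]
  have hRpos : 0 < R := lt_trans (by positivity) hR
  have key : ∀ d k, k + d = n - 1 → ‖a k‖ * r ^ (n - 1 - k) ≤ ‖a (n - 1)‖ := by
    intro d
    induction d with
    | zero => intro k hk; simp only [Nat.add_zero] at hk; subst hk; simp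
    | succ d ih =>
      intro k hk
      have h1 := hmono k (by omega)
      exact le_trans h1 (ih (k + 1) (by omega))
  have hterm : ∀ k ∈ Finset.range n,
      ‖q ^ k * a k‖ ≤ (‖a (n - 1)‖ / r ^ (n - 1)) * (r * R) ^ k := by
    intro k hk
    have hkn : k ≤ n - 1 := by simp at hk; omega
    have hkey := key (n - 1 - k) k (by omega)
    rw [norm_mul, norm_pow, hq]
    rw [div_mul_eq_mul_div, le_div_iff₀ (by positivity)]
    have hsplit : r ^ (n - 1) = r ^ (n - 1 - k) * r ^ k := by
      rw [← pow_add]; congr 1; omega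
    calc R ^ k * ‖a k‖ * r ^ (n - 1)
        = (‖a k‖ * r ^ (n - 1 - k)) * (r * R) ^ k := by
          rw [hsplit, mul_pow]; ring
      _ ≤ ‖a (n - 1)‖ * (r * R) ^ k :=
          mul_le_mul_of_nonneg_right hkey (by positivity)
  calc ‖∑ k ∈ Finset.range n, q ^ k * a k‖
      ≤ ∑ k ∈ Finset.range n, ‖q ^ k * a k‖ := norm_sum_le _ _
    _ ≤ ∑ k ∈ Finset.range n, (‖a (n - 1)‖ / r ^ (n - 1)) * (r * R) ^ k :=
        Finset.sum_le_sum hterm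
    _ = (‖a (n - 1)‖ / r ^ (n - 1)) * ∑ k ∈ Finset.range n, (r * R) ^ k := by
        rw [Finset.mul_sum]
    _ = (‖a (n - 1)‖ / r ^ (n - 1)) * (((r * R) ^ n - 1) / (r * R - 1)) := by
        rw [geom_sum_eq (ne_of_gt hrR)]
    _ = ‖a (n - 1)‖ * ((r * R) ^ n - 1) / (r ^ (n - 1) * (r * R - 1)) := by
        field_simp
end

section
/- Let n ≥ 1 and let a_0, …, a_n ∈ ℍ, not all zero, with a_n ≠ 0, such that there exist a nonzero real number β and a real α with 0 ≤ α ≤ π/2 satisfying: for every k = 0, 1, …, n with a_k ≠ 0, the angle ∠(a_k, β·1) ≤ α, and ‖a_0‖ ≤ ‖a_1‖ ≤ ⋯ ≤ ‖a_{n−1}‖ ≤ ‖a_n‖. Define p(q) = ∑_{k=0}^{n} q^k · a_k for q ∈ ℍ. Then every quaternion q with p(q) = 0 satisfies ‖q‖ ≤ cos α + sin α + (2 sin α / ‖a_n‖) · ∑_{k=0}^{n−1} ‖a_k‖. -/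
/-!
Multiplying `p` on the left by `q - 1` and using `p(q) = 0` gives
`q^(n+1) a_n = a_0 + ∑_{k<n} q^(k+1) (a_(k+1) - a_k)`, so for `‖q‖ > 1` one gets
`‖q‖ ‖a_n‖ ≤ ‖a_0‖ + ∑_{k<n} ‖a_(k+1) - a_k‖`. All coefficients lie in the cone of half-angle `α`
around `β`, so by the triangle inequality for angles any two of them make an angle at most `2α`,
and the law of cosines bounds `‖a_(k+1) - a_k‖` by
`(‖a_(k+1)‖ - ‖a_k‖) cos α + (‖a_(k+1)‖ + ‖a_k‖) sin α`. This sum telescopes to the claimed bound.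
-/

open Finset InnerProductGeometry RealInnerProductSpace Real

section ConeDifference

variable {E : Type*} [NormedAddCommGroup E] [InnerProductSpace ℝ E] {b c e : E} {α : ℝ}

theorem mul_cos_two_mul_le_inner_of_angle_le (hα : α ≤ π / 2)
    (hb : b ≠ 0 → angle b e ≤ α) (hc : c ≠ 0 → angle c e ≤ α) :
    ‖b‖ * ‖c‖ * cos (2 * α) ≤ ⟪b, c⟫ := by
  rcases eq_or_ne b 0 with rfl | hb0
  · simp
  rcases eq_or_ne c 0 with rfl | hc0
  · simp
  have hbc : angle b c ≤ 2 * α := calc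
    angle b c ≤ angle b e + angle e c := angle_le_angle_add_angle b e c
    _ ≤ 2 * α := by linarith [hb hb0, angle_comm e c ▸ hc hc0]
  rw [← cos_angle_mul_norm_mul_norm, mul_comm]
  gcongr
  exact cos_le_cos_of_nonneg_of_le_pi (angle_nonneg b c) (by linarith) hbc

theorem norm_sub_le_of_mul_cos_two_mul_le_inner (hα0 : 0 ≤ α) (hα : α ≤ π / 2)
    (hbc : ‖b‖ ≤ ‖c‖) (hinner : ‖b‖ * ‖c‖ * cos (2 * α) ≤ ⟪b, c⟫) :
    ‖c - b‖ ≤ (‖c‖ - ‖b‖) * cos α + (‖c‖ + ‖b‖) * sin α := by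
  have hcos : 0 ≤ cos α := cos_nonneg_of_mem_Icc ⟨by linarith, hα⟩
  have hsin : 0 ≤ sin α := sin_nonneg_of_nonneg_of_le_pi hα0 (by linarith)
  apply le_of_sq_le_sq _ (by positivity)
  have hsq : ((‖c‖ - ‖b‖) * cos α + (‖c‖ + ‖b‖) * sin α) ^ 2
      = ‖c‖ ^ 2 + ‖b‖ ^ 2 - 2 * (‖b‖ * ‖c‖ * cos (2 * α))
        + 2 * ((‖c‖ - ‖b‖) * (‖c‖ + ‖b‖)) * (cos α * sin α) := by
    rw [cos_two_mul]
    linear_combination (‖c‖ + ‖b‖) ^ 2 * sin_sq_add_cos_sq α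
  rw [norm_sub_sq_real, real_inner_comm, hsq]
  have hcross : 0 ≤ (‖c‖ - ‖b‖) * (‖c‖ + ‖b‖) := by
    nlinarith [norm_nonneg b]
  nlinarith [mul_nonneg hcross (mul_nonneg hcos hsin)]

theorem norm_sub_le_of_angle_le (hα0 : 0 ≤ α) (hα : α ≤ π / 2) (hbc : ‖b‖ ≤ ‖c‖)
    (hb : b ≠ 0 → angle b e ≤ α) (hc : c ≠ 0 → angle c e ≤ α) :
    ‖c - b‖ ≤ (‖c‖ - ‖b‖) * cos α + (‖c‖ + ‖b‖) * sin α :=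
  norm_sub_le_of_mul_cos_two_mul_le_inner hα0 hα hbc
    (mul_cos_two_mul_le_inner_of_angle_le hα hb hc)

end ConeDifference

theorem sub_one_mul_sum_pow_mul {R : Type*} [Ring R] (q : R) (a : ℕ → R) (n : ℕ) :
    (q - 1) * ∑ k ∈ range (n + 1), q ^ k * a k
      = q ^ (n + 1) * a n - a 0 - ∑ k ∈ range n, q ^ (k + 1) * (a (k + 1) - a k) := by
  induction n with
  | zero => simp [sub_mul]
  | succ n ih =>
    have hlast : (q - 1) * (q ^ (n + 1) * a (n + 1))
        = q ^ (n + 2) * a (n + 1) - q ^ (n + 1) * a (n + 1) := by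
      rw [← mul_assoc, sub_one_mul, ← pow_succ', sub_mul]
    rw [sum_range_succ, mul_add, ih, hlast, sum_range_succ, mul_sub]
    abel

theorem norm_mul_norm_le_of_sum_pow_mul_eq_zero {R : Type*} [NormedDivisionRing R] {q : R}
    {a : ℕ → R} {n : ℕ} (hq : 1 ≤ ‖q‖) (hroot : ∑ k ∈ range (n + 1), q ^ k * a k = 0) :
    ‖q‖ * ‖a n‖ ≤ ‖a 0‖ + ∑ k ∈ range n, ‖a (k + 1) - a k‖ := by
  have hlead : q ^ (n + 1) * a n = a 0 + ∑ k ∈ range n, q ^ (k + 1) * (a (k + 1) - a k) := by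
    have h := sub_one_mul_sum_pow_mul q a n
    rwa [hroot, mul_zero, eq_comm, sub_sub, sub_eq_zero] at h
  refine le_of_mul_le_mul_left ?_ (pow_pos (zero_lt_one.trans_le hq) n)
  calc ‖q‖ ^ n * (‖q‖ * ‖a n‖) = ‖q ^ (n + 1) * a n‖ := by
        rw [norm_mul, norm_pow, pow_succ, mul_assoc]
    _ ≤ ‖a 0‖ + ∑ k ∈ range n, ‖q‖ ^ (k + 1) * ‖a (k + 1) - a k‖ := by
        rw [hlead]
        refine (norm_add_le _ _).trans (add_le_add_right ((norm_sum_le _ _).trans_eq ?_) _)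
        simp only [norm_mul, norm_pow]
    _ ≤ ‖q‖ ^ n * (‖a 0‖ + ∑ k ∈ range n, ‖a (k + 1) - a k‖) := by
        rw [mul_add, mul_sum]
        gcongr with k hk
        · exact le_mul_of_one_le_left (norm_nonneg _) (one_le_pow₀ hq)
        · exact mem_range.1 hk

theorem sum_range_sub_mul_add_add_mul (x : ℕ → ℝ) (u v : ℝ) (n : ℕ) :
    ∑ k ∈ range n, ((x (k + 1) - x k) * u + (x (k + 1) + x k) * v)
      = (x n - x 0) * u + (x n - x 0 + 2 * ∑ k ∈ range n, x k) * v := by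
  induction n with
  | zero => simp
  | succ n ih => rw [sum_range_succ, ih, sum_range_succ]; ring

theorem enestrom_kakeya_quaternion_angle_general (n : ℕ) (a : ℕ → Quaternion ℝ)
    (han : a n ≠ 0)
    (β : ℝ) (α : ℝ) (hα0 : 0 ≤ α) (hα : α ≤ Real.pi / 2)
    (hangle : ∀ k ≤ n, a k ≠ 0 →
      InnerProductGeometry.angle (a k) ((β : Quaternion ℝ)) ≤ α)
    (hmono : ∀ k < n, ‖a k‖ ≤ ‖a (k + 1)‖)
    (q : Quaternion ℝ)
    (hq : ∑ k ∈ Finset.range (n + 1), q ^ k * a k = 0) :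
    ‖q‖ ≤ Real.cos α + Real.sin α +
      2 * Real.sin α / ‖a n‖ * ∑ k ∈ Finset.range n, ‖a k‖ := by
  have hcos : 0 ≤ cos α := cos_nonneg_of_mem_Icc ⟨by linarith [pi_pos], hα⟩
  have hsin : 0 ≤ sin α := sin_nonneg_of_nonneg_of_le_pi hα0 (by linarith [pi_pos])
  have hcos_add_sin : 1 ≤ cos α + sin α := by nlinarith [sin_sq_add_cos_sq α]
  have hnorm : 0 < ‖a n‖ := norm_pos_iff.2 han
  have hsum : 0 ≤ ∑ k ∈ range n, ‖a k‖ := sum_nonneg fun k _ => norm_nonneg _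
  rcases le_or_gt ‖q‖ 1 with hq1 | hq1
  · have : 0 ≤ 2 * sin α / ‖a n‖ * ∑ k ∈ range n, ‖a k‖ := by positivity
    linarith
  have hdiff : ∑ k ∈ range n, ‖a (k + 1) - a k‖ ≤ ∑ k ∈ range n,
      ((‖a (k + 1)‖ - ‖a k‖) * cos α + (‖a (k + 1)‖ + ‖a k‖) * sin α) := by
    refine sum_le_sum fun k hk => ?_
    have hk : k < n := mem_range.1 hk
    exact norm_sub_le_of_angle_le hα0 hα (hmono k hk) (hangle k hk.le) (hangle (k + 1) hk)
  have hbound := (norm_mul_norm_le_of_sum_pow_mul_eq_zero hq1.le hq).trans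
    (add_le_add_right hdiff _)
  rw [sum_range_sub_mul_add_add_mul (fun k => ‖a k‖)] at hbound
  refine le_of_mul_le_mul_right ?_ hnorm
  rw [add_mul, div_mul_eq_mul_div, div_mul_eq_mul_div, mul_div_cancel_right₀ _ hnorm.ne']
  linarith [mul_nonneg (norm_nonneg (a 0)) (sub_nonneg.2 hcos_add_sin)]

/-- Theorem 3.7 (quaternionic instance): if every nonzero coefficient makes an angle at most
`α ≤ π/2` with the real direction `β`, and the moduli of the coefficients are nondecreasing,
then all zeros of `p(q) = ∑ q^k a_k` lie in the stated ball. -/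
theorem enestrom_kakeya_quaternion_angle (n : ℕ) (hn : 1 ≤ n) (a : ℕ → Quaternion ℝ)
    (hnz : ∃ k ≤ n, a k ≠ 0) (han : a n ≠ 0)
    (β : ℝ) (hβ : β ≠ 0) (α : ℝ) (hα0 : 0 ≤ α) (hα : α ≤ Real.pi / 2)
    (hangle : ∀ k ≤ n, a k ≠ 0 →
      InnerProductGeometry.angle (a k) ((β : Quaternion ℝ)) ≤ α)
    (hmono : ∀ k < n, ‖a k‖ ≤ ‖a (k + 1)‖)
    (q : Quaternion ℝ)
    (hq : ∑ k ∈ Finset.range (n + 1), q ^ k * a k = 0) :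
    ‖q‖ ≤ Real.cos α + Real.sin α +
      2 * Real.sin α / ‖a n‖ * ∑ k ∈ Finset.range n, ‖a k‖ :=
  enestrom_kakeya_quaternion_angle_general n a han β α hα0 hα hangle hmono q hq
end

section
/- Let p(q) = ∑_{k=0}^{n} q^k · a_k with a_0, …, a_n ∈ ℍ, and let M ≥ 0 be such that ‖p(q)‖ ≤ M for every quaternion q with ‖q‖ = 1. Then for every quaternion q with ‖q‖ ≥ 1 one has ‖p(q)‖ ≤ M · ‖q‖^n. -/
/-!
Every quaternion lies in a slice `ℝ + ℝ I` with `I * I = -1`, and left multiplication by this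
isometric copy of `ℂ` makes `ℍ` a normed `ℂ`-vector space. On the slice, `p` is the polynomial
`w ↦ ∑ wᵏ • aₖ` with coefficients in that space, so it suffices to treat such polynomials. For them
the reversed polynomial `g u = ∑ uⁿ⁻ᵏ • aₖ` is entire, `p z = zⁿ • g z⁻¹`, and `‖g‖ = ‖p‖ ≤ M` on the
unit circle; the maximum modulus principle bounds `‖g z⁻¹‖` by `M` when `‖z‖ ≥ 1`.
-/

open Finset Quaternion Metric

theorem sum_pow_smul_eq_pow_smul_sum_inv_pow_smul {𝕜 E : Type*} [Field 𝕜] [AddCommGroup E]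
    [Module 𝕜 E] (n : ℕ) (a : ℕ → E) {w : 𝕜} (hw : w ≠ 0) :
    ∑ k ∈ range (n + 1), w ^ k • a k = w ^ n • ∑ k ∈ range (n + 1), w⁻¹ ^ (n - k) • a k := by
  rw [smul_sum]
  refine sum_congr rfl fun k hk => ?_
  rw [smul_smul, inv_pow, ← pow_sub₀ w hw (Nat.sub_le n k),
    Nat.sub_sub_self (Nat.lt_succ_iff.mp (mem_range.mp hk))]

theorem norm_sum_pow_smul_le_mul_pow_of_norm_le_on_sphere {E : Type*} [NormedAddCommGroup E]
    [NormedSpace ℂ E] (n : ℕ) (a : ℕ → E) {M : ℝ}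
    (hbound : ∀ w : ℂ, ‖w‖ = 1 → ‖∑ k ∈ range (n + 1), w ^ k • a k‖ ≤ M)
    {z : ℂ} (hz : 1 ≤ ‖z‖) :
    ‖∑ k ∈ range (n + 1), z ^ k • a k‖ ≤ M * ‖z‖ ^ n := by
  set G : ℂ → E := fun u => ∑ k ∈ range (n + 1), u ^ (n - k) • a k
  have hG_sphere : ∀ u ∈ frontier (ball (0 : ℂ) 1), ‖G u‖ ≤ M := by
    intro u hu
    rw [frontier_ball 0 one_ne_zero, mem_sphere_zero_iff_norm] at hu
    have hu0 : u ≠ 0 := norm_ne_zero_iff.mp (hu ▸ one_ne_zero)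
    have h := hbound u⁻¹ (by rw [norm_inv, hu, inv_one])
    rwa [sum_pow_smul_eq_pow_smul_sum_inv_pow_smul n a (inv_ne_zero hu0), inv_inv, norm_smul,
      norm_pow, norm_inv, hu, inv_one, one_pow, one_mul] at h
  have hG_inv : ‖G z⁻¹‖ ≤ M := by
    refine Complex.norm_le_of_forall_mem_frontier_norm_le isBounded_ball
      (Differentiable.diffContOnCl ?_) hG_sphere ?_
    · exact Differentiable.fun_sum fun k _ => (differentiable_pow (n - k)).smul_const (a k)
    · rw [closure_ball 0 one_ne_zero, mem_closedBall_zero_iff, norm_inv]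
      exact inv_le_one_of_one_le₀ hz
  have hz0 : z ≠ 0 := norm_ne_zero_iff.mp (by linarith)
  calc ‖∑ k ∈ range (n + 1), z ^ k • a k‖ = ‖z‖ ^ n * ‖G z⁻¹‖ := by
        rw [sum_pow_smul_eq_pow_smul_sum_inv_pow_smul n a hz0, norm_smul, norm_pow]
    _ ≤ ‖z‖ ^ n * M := by gcongr
    _ = M * ‖z‖ ^ n := mul_comm _ _

namespace Quaternion

theorem mul_self_eq_neg_one_iff {I : ℍ[ℝ]} : I * I = -1 ↔ I.re = 0 ∧ ‖I‖ = 1 := by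
  rw [← sq, ← sq_eq_neg_normSq, normSq_eq_norm_mul_self]
  refine ⟨fun hI => ?_, fun ⟨hre, hnorm⟩ => by rw [hre, hnorm]; simp⟩
  have hnorm : ‖I‖ = 1 := by
    have h := congrArg normSq hI
    rw [map_pow, normSq_neg, map_one, normSq_eq_norm_mul_self, ← sq, ← pow_mul] at h
    exact (pow_eq_one_iff_of_nonneg (norm_nonneg I) (by norm_num)).mp h
  refine ⟨?_, hnorm⟩
  rw [hI, hnorm]
  simp

theorem norm_liftAux {I : ℍ[ℝ]} (hI : I * I = -1) (z : ℂ) :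
    ‖Complex.liftAux I hI z‖ = ‖z‖ := by
  obtain ⟨hre, hnorm⟩ := mul_self_eq_neg_one_iff.mp hI
  have hnormSq : normSq (Complex.liftAux I hI z) = Complex.normSq z := by
    rw [Complex.liftAux_apply, Complex.normSq_apply, normSq_add, normSq_smul,
      normSq_eq_norm_mul_self I, hnorm, algebraMap_def, normSq_coe]
    simp [hre]
    ring
  rw [← sq_eq_sq₀ (norm_nonneg _) (norm_nonneg _), sq, sq, ← normSq_eq_norm_mul_self, hnormSq,
    Complex.normSq_eq_norm_sq, sq]

theorem exists_im_eq_norm_smul (q : ℍ[ℝ]) :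
    ∃ u : ℍ[ℝ], u.re = 0 ∧ ‖u‖ = 1 ∧ q.im = ‖q.im‖ • u := by
  by_cases hq : q.im = 0
  -- without `@id` the anonymous constructor elaborates at `ℍ[ℝ,-1,0,-1]` and `zero_smul` misfires
  · refine ⟨@id ℍ[ℝ] ⟨0, 1, 0, 0⟩, rfl, ?_, by rw [hq, norm_zero, zero_smul]⟩
    refine (pow_eq_one_iff_of_nonneg (norm_nonneg _) two_ne_zero).mp ?_
    rw [sq, ← normSq_eq_norm_mul_self, normSq_def']
    norm_num [id]
  · refine ⟨‖q.im‖⁻¹ • q.im, by simp, norm_smul_inv_norm hq, ?_⟩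
    rw [smul_smul, mul_inv_cancel₀ (norm_ne_zero_iff.mpr hq), one_smul]

theorem exists_liftAux_eq (q : ℍ[ℝ]) :
    ∃ (I : ℍ[ℝ]) (hI : I * I = -1) (z : ℂ), Complex.liftAux I hI z = q := by
  obtain ⟨I, hre, hnorm, him⟩ := exists_im_eq_norm_smul q
  refine ⟨I, mul_self_eq_neg_one_iff.mpr ⟨hre, hnorm⟩, ⟨q.re, ‖q.im‖⟩, ?_⟩
  rw [Complex.liftAux_apply, ← him, algebraMap_def, re_add_im]

noncomputable abbrev sliceNormedSpace {I : ℍ[ℝ]} (hI : I * I = -1) : NormedSpace ℂ ℍ[ℝ] :=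
  letI : Module ℂ ℍ[ℝ] := (Complex.liftAux I hI).toRingHom.toModule
  { norm_smul_le c x := by
      rw [RingHom.toModule_smul, AlgHom.toRingHom_eq_coe, RingHom.coe_coe, norm_mul,
        norm_liftAux] }

end Quaternion

theorem growth_estimate_quaternion_general (n : ℕ) (a : ℕ → Quaternion ℝ) (M : ℝ)
    (hbound : ∀ q : Quaternion ℝ, ‖q‖ = 1 →
      ‖∑ k ∈ Finset.range (n + 1), q ^ k * a k‖ ≤ M)
    (q : Quaternion ℝ) (hq : 1 ≤ ‖q‖) :
    ‖∑ k ∈ Finset.range (n + 1), q ^ k * a k‖ ≤ M * ‖q‖ ^ n := by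
  obtain ⟨I, hI, z, rfl⟩ := exists_liftAux_eq q
  let _ := sliceNormedSpace hI
  have hpoly : ∀ w : ℂ, ∑ k ∈ range (n + 1), Complex.liftAux I hI w ^ k * a k =
      ∑ k ∈ range (n + 1), w ^ k • a k := fun w => by simp only [← map_pow]; rfl
  rw [hpoly, norm_liftAux]
  refine norm_sum_pow_smul_le_mul_pow_of_norm_le_on_sphere n a (fun w hw => ?_) ?_
  · rw [← hpoly]
    exact hbound _ (by rw [norm_liftAux, hw])
  · rwa [norm_liftAux] at hq

/-- Growth estimate for quaternionic polynomials: if `‖p(q)‖ ≤ M` on the unit sphere,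
then `‖p(q)‖ ≤ M ‖q‖^n` for `‖q‖ ≥ 1`. -/
theorem growth_estimate_quaternion (n : ℕ) (a : ℕ → Quaternion ℝ) (M : ℝ) (hM : 0 ≤ M)
    (hbound : ∀ q : Quaternion ℝ, ‖q‖ = 1 →
      ‖∑ k ∈ Finset.range (n + 1), q ^ k * a k‖ ≤ M)
    (q : Quaternion ℝ) (hq : 1 ≤ ‖q‖) :
    ‖∑ k ∈ Finset.range (n + 1), q ^ k * a k‖ ≤ M * ‖q‖ ^ n :=
  growth_estimate_quaternion_general n a M hbound q hq
end

section
/- Let n ≥ 1 and let a_0, …, a_n ∈ ℍ such that there exist a nonzero real number β and a real α with 0 ≤ α ≤ π/2 satisfying: for every k = 0, 1, …, n with a_k ≠ 0, the angle ∠(a_k, β·1) ≤ α, and ‖a_0‖ ≤ ‖a_1‖ ≤ ⋯ ≤ ‖a_n‖. Then for every quaternion q with ‖q‖ = 1, one has ‖a_0 + ∑_{k=1}^{n} q^k · (a_k − a_{k−1})‖ ≤ ‖a_n‖·(cos α + sin α) + 2 sin α · ∑_{k=0}^{n−1} ‖a_k‖. -/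
open Finset

open scoped RealInnerProductSpace

set_option maxHeartbeats 1000000

/-- Key pointwise lemma: if `a` and `b` both have inner product with the unit
vector `u` at least `cos α` times their norms, and `‖b‖ ≤ ‖a‖`, then
`‖a - b‖ ≤ (‖a‖ - ‖b‖) cos α + (‖a‖ + ‖b‖) sin α`. -/
lemma quat_diff_key (α : ℝ) (hα0 : 0 ≤ α) (hα : α ≤ Real.pi / 2)
    (u a b : Quaternion ℝ) (hu : ‖u‖ = 1)
    (ha : Real.cos α * ‖a‖ ≤ ⟪a, u⟫) (hb : Real.cos α * ‖b‖ ≤ ⟪b, u⟫)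
    (hab : ‖b‖ ≤ ‖a‖) :
    ‖a - b‖ ≤ (‖a‖ - ‖b‖) * Real.cos α + (‖a‖ + ‖b‖) * Real.sin α := by
  have hs : 0 ≤ Real.sin α := Real.sin_nonneg_of_nonneg_of_le_pi hα0
    (hα.trans (by linarith [Real.pi_pos]))
  have hc : 0 ≤ Real.cos α := Real.cos_nonneg_of_mem_Icc ⟨by linarith [Real.pi_pos], hα⟩
  have hsc : Real.sin α ^ 2 + Real.cos α ^ 2 = 1 := Real.sin_sq_add_cos_sq α
  set ta : ℝ := ⟪a, u⟫ with hta
  set tb : ℝ := ⟪b, u⟫ with htb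
  have hA : (0:ℝ) ≤ ‖a‖ := norm_nonneg a
  have hB : (0:ℝ) ≤ ‖b‖ := norm_nonneg b
  have huu : ⟪u, u⟫ = (1:ℝ) := by
    rw [real_inner_self_eq_norm_sq, hu]; norm_num
  -- orthogonal components
  have hinner : ⟪a - ta • u, b - tb • u⟫ = ⟪a, b⟫ - ta * tb := by
    have h1 : ⟪u, b⟫ = tb := by rw [htb]; exact real_inner_comm b u
    have h2 : ⟪a, u⟫ = ta := hta.symm
    simp only [inner_sub_left, inner_sub_right, real_inner_smul_left, real_inner_smul_right,
      huu, h1, h2, mul_one]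
    ring
  have hna2 : ‖a - ta • u‖ ^ 2 = ‖a‖ ^ 2 - ta ^ 2 := by
    rw [norm_sub_sq_real]
    have h : ⟪a, ta • u⟫ = ta * ta := by
      rw [real_inner_smul_right, ← hta]
    rw [h, norm_smul, hu]
    simp [Real.norm_eq_abs, sq_abs]
    ring
  have hnb2 : ‖b - tb • u‖ ^ 2 = ‖b‖ ^ 2 - tb ^ 2 := by
    rw [norm_sub_sq_real]
    have h : ⟪b, tb • u⟫ = tb * tb := by
      rw [real_inner_smul_right, ← htb]
    rw [h, norm_smul, hu]
    simp [Real.norm_eq_abs, sq_abs]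
    ring
  have hss : Real.sin α ^ 2 = 1 - Real.cos α ^ 2 := by linarith
  have hta1 : (Real.cos α * ‖a‖) ^ 2 ≤ ta ^ 2 :=
    pow_le_pow_left₀ (mul_nonneg hc hA) ha 2
  have htb1 : (Real.cos α * ‖b‖) ^ 2 ≤ tb ^ 2 :=
    pow_le_pow_left₀ (mul_nonneg hc hB) hb 2
  have hna : ‖a - ta • u‖ ≤ Real.sin α * ‖a‖ := by
    have h2 : ‖a - ta • u‖ ^ 2 ≤ (Real.sin α * ‖a‖) ^ 2 := by
      rw [hna2, mul_pow, hss]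
      rw [mul_pow] at hta1
      nlinarith [hta1]
    nlinarith [norm_nonneg (a - ta • u), mul_nonneg hs hA]
  have hnb : ‖b - tb • u‖ ≤ Real.sin α * ‖b‖ := by
    have h2 : ‖b - tb • u‖ ^ 2 ≤ (Real.sin α * ‖b‖) ^ 2 := by
      rw [hnb2, mul_pow, hss]
      rw [mul_pow] at htb1
      nlinarith [htb1]
    nlinarith [norm_nonneg (b - tb • u), mul_nonneg hs hB]
  have hCS : |⟪a - ta • u, b - tb • u⟫| ≤ ‖a - ta • u‖ * ‖b - tb • u‖ :=
    abs_real_inner_le_norm _ _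
  have hlow : Real.cos α ^ 2 * (‖a‖ * ‖b‖) - Real.sin α ^ 2 * (‖a‖ * ‖b‖) ≤ ⟪a, b⟫ := by
    have h1 : Real.cos α ^ 2 * (‖a‖ * ‖b‖) ≤ ta * tb := by
      have h := mul_le_mul ha hb (mul_nonneg hc hB) (le_trans (mul_nonneg hc hA) ha)
      have e : Real.cos α ^ 2 * (‖a‖ * ‖b‖) = Real.cos α * ‖a‖ * (Real.cos α * ‖b‖) := by ring
      rw [e]; exact h
    have h2 : ‖a - ta • u‖ * ‖b - tb • u‖ ≤ Real.sin α ^ 2 * (‖a‖ * ‖b‖) := by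
      have h := mul_le_mul hna hnb (norm_nonneg _) (mul_nonneg hs hA)
      have e : Real.sin α ^ 2 * (‖a‖ * ‖b‖) = Real.sin α * ‖a‖ * (Real.sin α * ‖b‖) := by ring
      rw [e]; exact h
    have h3 : -(‖a - ta • u‖ * ‖b - tb • u‖) ≤ ⟪a, b⟫ - ta * tb := by
      rw [← hinner]; exact neg_le_of_abs_le hCS
    linarith
  have hsq : ‖a - b‖ ^ 2 = ‖a‖ ^ 2 - 2 * ⟪a, b⟫ + ‖b‖ ^ 2 := norm_sub_sq_real a b
  have hR : 0 ≤ (‖a‖ - ‖b‖) * Real.cos α + (‖a‖ + ‖b‖) * Real.sin α :=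
    add_nonneg (mul_nonneg (sub_nonneg.2 hab) hc) (mul_nonneg (add_nonneg hA hB) hs)
  have hfin : ‖a - b‖ ^ 2 ≤ ((‖a‖ - ‖b‖) * Real.cos α + (‖a‖ + ‖b‖) * Real.sin α) ^ 2 := by
    have hcross : 0 ≤ 2 * ((‖a‖ - ‖b‖) * Real.cos α) * ((‖a‖ + ‖b‖) * Real.sin α) :=
      mul_nonneg (mul_nonneg (by norm_num) (mul_nonneg (sub_nonneg.2 hab) hc))
        (mul_nonneg (add_nonneg hA hB) hs)
    nlinarith [hsq, hlow, hcross, hss]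
  nlinarith [hfin, hR, norm_nonneg (a - b)]

/-- Unit-sphere bound on the auxiliary function in the proof of Theorem 3.7
(quaternionic instance): if every nonzero coefficient makes an angle at most `α ≤ π/2`
with the real direction `β` and the moduli are nondecreasing, then for `‖q‖ = 1`,
`‖a₀ + ∑_{k=1}^n q^k (a_k − a_{k−1})‖ ≤ ‖a_n‖(cos α + sin α) + 2 sin α ∑_{k<n} ‖a_k‖`. -/
theorem auxiliary_unit_sphere_bound (n : ℕ) (hn : 1 ≤ n) (a : ℕ → Quaternion ℝ)
    (β : ℝ) (hβ : β ≠ 0) (α : ℝ) (hα0 : 0 ≤ α) (hα : α ≤ Real.pi / 2)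
    (hangle : ∀ k ≤ n, a k ≠ 0 →
      InnerProductGeometry.angle (a k) ((β : Quaternion ℝ)) ≤ α)
    (hmono : ∀ k < n, ‖a k‖ ≤ ‖a (k + 1)‖)
    (q : Quaternion ℝ) (hq : ‖q‖ = 1) :
    ‖a 0 + ∑ k ∈ Finset.Icc 1 n, q ^ k * (a k - a (k - 1))‖ ≤
      ‖a n‖ * (Real.cos α + Real.sin α) + 2 * Real.sin α * ∑ k ∈ Finset.range n, ‖a k‖ := by
  have hs : 0 ≤ Real.sin α := Real.sin_nonneg_of_nonneg_of_le_pi hα0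
    (hα.trans (by linarith [Real.pi_pos]))
  have hc : 0 ≤ Real.cos α := Real.cos_nonneg_of_mem_Icc ⟨by linarith [Real.pi_pos], hα⟩
  have hc1 : Real.cos α ≤ 1 := Real.cos_le_one α
  have hs1 : Real.sin α ≤ 1 := Real.sin_le_one α
  have hsc : Real.sin α ^ 2 + Real.cos α ^ 2 = 1 := Real.sin_sq_add_cos_sq α
  have hcs1 : 1 ≤ Real.cos α + Real.sin α := by nlinarith
  -- the unit vector in the direction of β
  have hβq : (β : Quaternion ℝ) ≠ 0 := by
    intro h
    apply hβ
    have : ‖(β : Quaternion ℝ)‖ = 0 := by rw [h, norm_zero]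
    rw [Quaternion.norm_coe] at this
    exact abs_eq_zero.mp this
  set u : Quaternion ℝ := ‖(β : Quaternion ℝ)‖⁻¹ • (β : Quaternion ℝ) with hudef
  have hβpos : 0 < ‖(β : Quaternion ℝ)‖ := norm_pos_iff.mpr hβq
  have hu : ‖u‖ = 1 := by
    rw [hudef, norm_smul, Real.norm_eq_abs, abs_inv, abs_norm,
      inv_mul_cancel₀ (ne_of_gt hβpos)]
  have hinner : ∀ k ≤ n, Real.cos α * ‖a k‖ ≤ ⟪a k, u⟫ := by
    intro k hk
    by_cases hz : a k = 0
    · simp [hz]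
    · have hang : InnerProductGeometry.angle (a k) u ≤ α := by
        rw [hudef, InnerProductGeometry.angle_smul_right_of_pos _ _ (inv_pos.mpr hβpos)]
        exact hangle k hk hz
      have hle : Real.cos α ≤ Real.cos (InnerProductGeometry.angle (a k) u) :=
        Real.cos_le_cos_of_nonneg_of_le_pi (InnerProductGeometry.angle_nonneg _ _)
          (hα.trans (by linarith [Real.pi_pos])) hang
      rw [InnerProductGeometry.cos_angle, hu, mul_one] at hle
      have hpos : 0 < ‖a k‖ := norm_pos_iff.mpr hz
      rw [le_div_iff₀ hpos] at hle
      linarith [hle]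
  -- rewrite the sum over Icc as a sum over range
  have hrw : ∑ k ∈ Finset.Icc 1 n, q ^ k * (a k - a (k - 1)) =
      ∑ i ∈ Finset.range n, q ^ (i + 1) * (a (i + 1) - a i) := by
    rw [← Finset.Ico_add_one_right_eq_Icc, Finset.sum_Ico_eq_sum_range]
    simp [add_comm]
  rw [hrw]
  have hterm : ∀ i ∈ Finset.range n, ‖q ^ (i + 1) * (a (i + 1) - a i)‖ ≤
      (Real.cos α + Real.sin α) * (‖a (i + 1)‖ - ‖a i‖) + 2 * Real.sin α * ‖a i‖ := by
    intro i hi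
    rw [Finset.mem_range] at hi
    have h1 : ‖q ^ (i + 1) * (a (i + 1) - a i)‖ = ‖a (i + 1) - a i‖ := by
      rw [norm_mul, norm_pow, hq, one_pow, one_mul]
    rw [h1]
    have := quat_diff_key α hα0 hα u (a (i + 1)) (a i) hu
      (hinner (i + 1) hi) (hinner i (le_of_lt (Nat.lt_of_lt_of_le hi (le_refl n))))
      (hmono i hi)
    linarith
  calc ‖a 0 + ∑ i ∈ Finset.range n, q ^ (i + 1) * (a (i + 1) - a i)‖
      ≤ ‖a 0‖ + ‖∑ i ∈ Finset.range n, q ^ (i + 1) * (a (i + 1) - a i)‖ := norm_add_le _ _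
    _ ≤ ‖a 0‖ + ∑ i ∈ Finset.range n, ‖q ^ (i + 1) * (a (i + 1) - a i)‖ := by
        gcongr
        exact norm_sum_le _ _
    _ ≤ ‖a 0‖ + ∑ i ∈ Finset.range n,
          ((Real.cos α + Real.sin α) * (‖a (i + 1)‖ - ‖a i‖) + 2 * Real.sin α * ‖a i‖) := by
        gcongr with i hi
        exact hterm i hi
    _ = ‖a 0‖ + ((Real.cos α + Real.sin α) * (‖a n‖ - ‖a 0‖)
          + 2 * Real.sin α * ∑ k ∈ Finset.range n, ‖a k‖) := by
        rw [Finset.sum_add_distrib, ← Finset.mul_sum, ← Finset.mul_sum,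
          Finset.sum_range_sub (fun i => ‖a i‖)]
    _ ≤ ‖a n‖ * (Real.cos α + Real.sin α) + 2 * Real.sin α * ∑ k ∈ Finset.range n, ‖a k‖ := by
        nlinarith [norm_nonneg (a 0)]
end
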